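/- Let T be a tree and let a−b be a true edge of T with a,b both non-leaf. In the moral graph T^M, sep(c,d | {a,b}) holds for some vertices c,d ∉ {a,b} if and only if a−b is an edge of T with both endpoints non-leaf (given a,b are adjacent in T^M). -/

import Mathlib

open SimpleGraph

/-- A leaf of a graph: a vertex with exactly one neighbor. -/
def IsLeaf {V : Type*} (G : SimpleGraph V) (i : V) : Prop := ∃! j, G.Adj i j

/-- The moral graph of `G`: vertices at distance 1 or 2 are joined. -/
def moral {V : Type*} (G : SimpleGraph V) : SimpleGraph V where
  Adj i j := i ≠ j ∧ G.dist i j ≤ 2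
  symm := by
    refine ⟨?_⟩
    rintro i j ⟨h1, h2⟩
    exact ⟨h1.symm, by rwa [SimpleGraph.dist_comm]⟩
  loopless := by refine ⟨?_⟩; rintro i ⟨h, -⟩; exact h rfl

section Helpers


variable {V : Type*} {T : SimpleGraph V}

private lemma tree_bridge' (hT : T.IsTree) {a b : V} (hab : T.Adj a b) (p : T.Walk a b) :
    s(a, b) ∈ p.edges :=
  (isBridge_iff_adj_and_forall_walk_mem_edges.mp
    (isAcyclic_iff_forall_adj_isBridge.mp hT.2 hab)) p

private lemma dist_split' (hc : T.Connected) {x y v : V} (p : T.Walk x y)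
    (hp : p.length = T.dist x y) (hv : v ∈ p.support) :
    T.dist x y = T.dist x v + T.dist v y := by
  classical
  have h1 := dist_le (p.takeUntil v hv)
  have h2 := dist_le (p.dropUntil v hv)
  have h3 : (p.takeUntil v hv).length + (p.dropUntil v hv).length = p.length := by
    rw [← Walk.length_append, p.take_spec hv]
  have h4 := hc.dist_triangle (u := x) (v := v) (w := y)
  omega

/-- `x` is on the `a`-side of edge `a-b`: every walk from `x` to `b` passes `a`. -/
private def Aside (T : SimpleGraph V) (a b x : V) : Prop := ∀ p : T.Walk x b, a ∈ p.support

private lemma aside_neighbor (hT : T.IsTree) {a b c : V} (hab : T.Adj a b)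
    (hac : T.Adj a c) (hcb : c ≠ b) : Aside T a b c := by
  intro p
  by_contra ha
  have hmem := tree_bridge' hT hab (Walk.cons hac p)
  rw [Walk.edges_cons, List.mem_cons] at hmem
  rcases hmem with h | h
  · rw [Sym2.eq_iff] at h
    rcases h with ⟨-, rfl⟩ | ⟨h1, -⟩
    · exact hcb rfl
    · exact hac.ne h1
  · exact ha (p.fst_mem_support_of_mem_edges h)

private lemma aside_total (hT : T.IsTree) {a b : V} (hab : T.Adj a b) (x : V) :
    Aside T a b x ∨ Aside T b a x := by
  by_contra h
  push_neg at h
  simp only [Aside, not_forall] at h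
  obtain ⟨⟨p, hp⟩, ⟨q, hq⟩⟩ := h
  have hmem := tree_bridge' hT hab (q.reverse.append p)
  rw [Walk.edges_append, List.mem_append, Walk.edges_reverse, List.mem_reverse] at hmem
  rcases hmem with h | h
  · exact hq (q.snd_mem_support_of_mem_edges h)
  · exact hp (p.fst_mem_support_of_mem_edges h)

private lemma aside_not_both (hT : T.IsTree) {a b x : V} (hab : T.Adj a b)
    (h1 : Aside T a b x) (h2 : Aside T b a x) : False := by
  obtain ⟨p, hp⟩ := hT.1.exists_walk_length_eq_dist x b
  obtain ⟨q, hq⟩ := hT.1.exists_walk_length_eq_dist x a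
  have e1 := dist_split' hT.1 p hp (h1 p)
  have e2 := dist_split' hT.1 q hq (h2 q)
  have d1 : T.dist a b = 1 := dist_eq_one_iff_adj.mpr hab
  have d2 : T.dist b a = 1 := dist_eq_one_iff_adj.mpr hab.symm
  rw [d1] at e1
  rw [d2] at e2
  omega

private lemma aside_cross (hT : T.IsTree) {a b x y : V} (hab : T.Adj a b)
    (hx : Aside T a b x) (hy : Aside T b a y) (hxy : (moral T).Adj x y) :
    x = a ∨ y = b := by
  by_contra hne
  push_neg at hne
  obtain ⟨hxa, hyb⟩ := hne
  have hxb : x ≠ b := by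
    rintro rfl
    have h := hx Walk.nil
    simp at h
    exact hab.ne h
  have hya : y ≠ a := by
    rintro rfl
    have h := hy Walk.nil
    simp at h
    exact hab.ne h.symm
  have d1 : T.dist a b = 1 := dist_eq_one_iff_adj.mpr hab
  have d2 : T.dist b a = 1 := dist_eq_one_iff_adj.mpr hab.symm
  obtain ⟨w, hw⟩ := hT.1.exists_walk_length_eq_dist x y
  have hwlen : w.length ≤ 2 := hw ▸ hxy.2
  obtain ⟨pyb, hpyb⟩ := hT.1.exists_walk_length_eq_dist y b
  obtain ⟨pya, hpya⟩ := hT.1.exists_walk_length_eq_dist y a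
  obtain ⟨pxa, hpxa⟩ := hT.1.exists_walk_length_eq_dist x a
  obtain ⟨pxb, hpxb⟩ := hT.1.exists_walk_length_eq_dist x b
  have haw : a ∈ w.support := by
    have h := hx (w.append pyb)
    rw [Walk.mem_support_append_iff] at h
    rcases h with h | h
    · exact h
    · exfalso
      have e1 := dist_split' hT.1 pyb hpyb h
      have e2 := dist_split' hT.1 pya hpya (hy pya)
      rw [d1] at e1
      rw [d2] at e2
      omega
  have hbw : b ∈ w.support := by
    have h := hy (w.reverse.append pxa)
    rw [Walk.mem_support_append_iff, Walk.support_reverse, List.mem_reverse] at h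
    rcases h with h | h
    · exact h
    · exfalso
      have e1 := dist_split' hT.1 pxa hpxa h
      have e2 := dist_split' hT.1 pxb hpxb (hx pxb)
      rw [d2] at e1
      rw [d1] at e2
      omega
  cases w with
  | nil =>
    simp at haw
    exact hxa haw.symm
  | cons h1 w1 =>
    cases w1 with
    | nil =>
      simp at haw
      rcases haw with h | h
      · exact hxa h.symm
      · exact hya h.symm
    | cons h2 w2 =>
      cases w2 with
      | nil =>
        simp at haw hbw
        rcases haw with h | h | h
        · exact hxa h.symm
        · rcases hbw with h' | h' | h'
          · exact hxb h'.symm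
          · exact hab.ne (h.trans h'.symm)
          · exact hyb h'.symm
        · exact hya h.symm
      | cons h3 w3 =>
        simp [Walk.length_cons] at hwlen

private lemma aside_propagate (hT : T.IsTree) {a b : V} (hab : T.Adj a b) :
    ∀ {x y : V} (p : (moral T).Walk x y), Aside T a b x → a ∉ p.support → b ∉ p.support →
      Aside T a b y := by
  intro x y p
  induction p with
  | nil => exact fun h _ _ => h
  | @cons u e z h q ih =>
    intro hx ha hb
    have hnext : Aside T a b e := by
      rcases aside_total hT hab e with h' | h'
      · exact h'
      · rcases aside_cross hT hab hx h' h with rfl | rfl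
        · exact absurd (Walk.start_mem_support _) ha
        · exact absurd (by rw [Walk.support_cons]; exact List.mem_cons_of_mem _ q.start_mem_support) hb
    have ha' : a ∉ q.support := fun hm => ha (by rw [Walk.support_cons]; exact List.mem_cons_of_mem _ hm)
    have hb' : b ∉ q.support := fun hm => hb (by rw [Walk.support_cons]; exact List.mem_cons_of_mem _ hm)
    exact ih hnext ha' hb'

private lemma moral_adj_of_adj {x y : V} (h : T.Adj x y) : (moral T).Adj x y :=
  ⟨h.ne, le_trans (dist_le (Walk.cons h Walk.nil)) one_le_two⟩

private lemma moral_adj_two {x m y : V} (hne : x ≠ y) (h1 : T.Adj x m) (h2 : T.Adj m y) :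
    (moral T).Adj x y :=
  ⟨hne, dist_le (Walk.cons h1 (Walk.cons h2 Walk.nil))⟩

private lemma build (hT : T.IsTree) {a b : V}
    (H : ¬T.Adj a b ∨ IsLeaf T a ∨ IsLeaf T b) :
    ∀ (n : ℕ) {c d : V} (p : T.Walk c d), p.length ≤ n → p.IsPath →
      c ≠ a → c ≠ b → d ≠ a → d ≠ b →
      ∃ q : (moral T).Walk c d, a ∉ q.support ∧ b ∉ q.support := by
  intro n
  induction n with
  | zero =>
    intro c d p hlen hp hca hcb hda hdb
    cases p with
    | nil => exact ⟨Walk.nil, by simp [Ne.symm hca], by simp [Ne.symm hcb]⟩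
    | cons h q => simp at hlen
  | succ n ih =>
    intro c d p hlen hp hca hcb hda hdb
    cases p with
    | nil => exact ⟨Walk.nil, by simp [Ne.symm hca], by simp [Ne.symm hcb]⟩
    | @cons _ e _ hce p' =>
      by_cases hea : a = e
      · subst hea
        cases p' with
        | nil => exact absurd rfl hda
        | @cons _ f _ hef p'' =>
          by_cases hfb : f = b
          · exfalso
            have hab' : T.Adj a b := hfb ▸ hef
            rcases H with hnadj | hla | hlb
            · exact hnadj hab'
            · obtain ⟨j, -, hu⟩ := hla
              exact hcb ((hu c hce.symm).trans (hu b hab').symm)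
            · cases p'' with
              | nil => exact hdb hfb
              | @cons _ g _ hfg p''' =>
                obtain ⟨j, -, hu⟩ := hlb
                have hga : g = a := (hu g (hfb ▸ hfg)).trans (hu a hab'.symm).symm
                rw [Walk.cons_isPath_iff, Walk.cons_isPath_iff] at hp
                exact hp.1.2 (by
                  rw [Walk.support_cons]
                  exact List.mem_cons_of_mem _ (hga ▸ p'''.start_mem_support))
          · have hfe : f ≠ a := hef.ne'
            rw [Walk.cons_isPath_iff] at hp
            have hfc : f ≠ c := by
              rintro rfl
              exact hp.2 (by
                rw [Walk.support_cons]
                exact List.mem_cons_of_mem _ p''.start_mem_support)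
            have hcf : (moral T).Adj c f := moral_adj_two (Ne.symm hfc) hce hef
            rw [Walk.cons_isPath_iff] at hp
            have hlen' : p''.length ≤ n := by
              simp only [Walk.length_cons] at hlen
              omega
            obtain ⟨q, hqa, hqb⟩ := ih p'' hlen' hp.1.1 hfe hfb hda hdb
            refine ⟨Walk.cons hcf q, ?_, ?_⟩
            · rw [Walk.support_cons]
              exact fun hm => (List.mem_cons.mp hm).elim (fun h => hca h.symm) hqa
            · rw [Walk.support_cons]
              exact fun hm => (List.mem_cons.mp hm).elim (fun h => hcb h.symm) hqb
      · by_cases heb : b = e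
        · subst heb
          cases p' with
          | nil => exact absurd rfl hdb
          | @cons _ f _ hef p'' =>
            by_cases hfa : f = a
            · exfalso
              have hab' : T.Adj a b := (hfa ▸ hef).symm
              rcases H with hnadj | hla | hlb
              · exact hnadj hab'
              · cases p'' with
                | nil => exact hda hfa
                | @cons _ g _ hfg p''' =>
                  obtain ⟨j, -, hu⟩ := hla
                  have hgb : g = b := (hu g (hfa ▸ hfg)).trans (hu b hab').symm
                  rw [Walk.cons_isPath_iff, Walk.cons_isPath_iff] at hp
                  exact hp.1.2 (by
                    rw [Walk.support_cons]
                    exact List.mem_cons_of_mem _ (hgb ▸ p'''.start_mem_support))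
              · obtain ⟨j, -, hu⟩ := hlb
                exact hca ((hu c hce.symm).trans (hu a hab'.symm).symm)
            · have hfe : f ≠ b := hef.ne'
              rw [Walk.cons_isPath_iff] at hp
              have hfc : f ≠ c := by
                rintro rfl
                exact hp.2 (by
                  rw [Walk.support_cons]
                  exact List.mem_cons_of_mem _ p''.start_mem_support)
              have hcf : (moral T).Adj c f := moral_adj_two (Ne.symm hfc) hce hef
              rw [Walk.cons_isPath_iff] at hp
              have hlen' : p''.length ≤ n := by
                simp only [Walk.length_cons] at hlen
                omega
              obtain ⟨q, hqa, hqb⟩ := ih p'' hlen' hp.1.1 hfa hfe hda hdb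
              refine ⟨Walk.cons hcf q, ?_, ?_⟩
              · rw [Walk.support_cons]
                exact fun hm => (List.mem_cons.mp hm).elim (fun h => hca h.symm) hqa
              · rw [Walk.support_cons]
                exact fun hm => (List.mem_cons.mp hm).elim (fun h => hcb h.symm) hqb
        · rw [Walk.cons_isPath_iff] at hp
          have hlen' : p'.length ≤ n := by
            simp only [Walk.length_cons] at hlen
            omega
          obtain ⟨q, hqa, hqb⟩ := ih p' hlen' hp.1 (Ne.symm hea) (Ne.symm heb) hda hdb
          refine ⟨Walk.cons (moral_adj_of_adj hce) q, ?_, ?_⟩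
          · rw [Walk.support_cons]
            exact fun hm => (List.mem_cons.mp hm).elim (fun h => hca h.symm) hqa
          · rw [Walk.support_cons]
            exact fun hm => (List.mem_cons.mp hm).elim (fun h => hcb h.symm) hqb

end Helpers

/-- among moral-graph edges `a − b`, separation of some pair `c, d ∉ {a,b}`
by `{a, b}` in the moral graph characterizes exactly the true tree edges whose endpoints
are both non-leaf vertices. -/
theorem stmt_8 {V : Type*} (T : SimpleGraph V) (hT : T.IsTree) (a b : V)
    (hadj : (moral T).Adj a b) :
    (∃ c d : V, c ≠ d ∧ c ≠ a ∧ c ≠ b ∧ d ≠ a ∧ d ≠ b ∧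
        ∀ p : (moral T).Walk c d, a ∈ p.support ∨ b ∈ p.support) ↔
      (T.Adj a b ∧ ¬ IsLeaf T a ∧ ¬ IsLeaf T b) := by
  constructor
  · rintro ⟨c, d, hcd, hca, hcb, hda, hdb, hsep⟩
    by_contra hC
    have H : ¬T.Adj a b ∨ IsLeaf T a ∨ IsLeaf T b := by tauto
    obtain ⟨p, hp, -⟩ := hT.existsUnique_path c d
    obtain ⟨q, hqa, hqb⟩ := build hT H p.length p le_rfl hp hca hcb hda hdb
    rcases hsep q with h | h
    exacts [hqa h, hqb h]
  · rintro ⟨hab, hla, hlb⟩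
    obtain ⟨c, hac, hcb⟩ : ∃ c, T.Adj a c ∧ c ≠ b := by
      by_contra h
      push_neg at h
      exact hla ⟨b, hab, fun j hj => h j hj⟩
    obtain ⟨d, hbd, hda⟩ : ∃ d, T.Adj b d ∧ d ≠ a := by
      by_contra h
      push_neg at h
      exact hlb ⟨a, hab.symm, fun j hj => h j hj⟩
    have hcd : c ≠ d := by
      rintro rfl
      have hmem := tree_bridge' hT hab (Walk.cons hac (Walk.cons hbd.symm Walk.nil))
      simp only [Walk.edges_cons, Walk.edges_nil, List.mem_cons, List.not_mem_nil,
        or_false, Sym2.eq_iff] at hmem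
      rcases hmem with (⟨-, h⟩ | ⟨h, -⟩) | (⟨h, -⟩ | ⟨-, h⟩)
      · exact hcb h.symm
      · exact hac.ne h
      · exact hac.ne h
      · exact hcb h.symm
    refine ⟨c, d, hcd, hac.ne', hcb, hda, hbd.ne', ?_⟩
    intro p
    by_contra h
    push_neg at h
    obtain ⟨ha, hb⟩ := h
    have h1 : Aside T a b c := aside_neighbor hT hab hac hcb
    have h2 : Aside T a b d := aside_propagate hT hab p h1 ha hb
    have h3 : Aside T b a d := aside_neighbor hT hab.symm hbd hda
    exact aside_not_both hT hab h2 h3
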